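/- arXiv:0910.3136 — 6 statements merged into one kernel-verified Lean document; each statement's English description precedes it below -/
import Mathlib

section
/- Higher-order Hardy-type inequality (Lemma 3.1): For every integer s ≥ 1 there exists a constant C > 0 (depending only on s) such that for every function u : ℝ → ℝ that is s times continuously differentiable on [0,1] and satisfies u(0) = 0 and u(1) = 0, one has Σ_{k=0}^{s-1} ( ∫_{0}^{1/2} |(d^k/dx^k)(u(x)/x)|² dx + ∫_{1/2}^{1} |(d^k/dx^k)(u(x)/(1−x))|² dx ) ≤ C Σ_{k=0}^{s} ∫_{0}^{1} |u^{(k)}(x)|² dx. -/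
/-!
If `u 0 = 0`, induction on `k` with an integration by parts shows that on `(0, 1)`
`(u / x)⁽ᵏ⁾ (y) = y^-(k+1) ∫₀ʸ τᵏ u⁽ᵏ⁺¹⁾(τ) dτ`, a weighted average `F` of `g = u⁽ᵏ⁺¹⁾`.
Such averages obey Hardy's inequality `∫₀ᵇ F² ≤ 4 ∫₀ᵇ g²`: with `P = y^(k+1) F`, the function
`-P² / y^(2k+1)` has derivative `(2k+1) F² - 2 F g`, so integrating over `[ε, b]` and absorbing
`2 F g ≤ F² / 2 + 2 g²` bounds `∫_ε^b F²` by `4 ∫ g²` plus the boundary term `2 ε F(ε)²`, which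
tends to `0` because `F` is bounded. The half `(1/2, 1)` is the reflection `x ↦ 1 - x` of
`(0, 1/2)`, so `C = 8` works.
-/

open Set Filter Topology MeasureTheory intervalIntegral

noncomputable def hardyOperator (k : ℕ) (g : ℝ → ℝ) (y : ℝ) : ℝ :=
  (∫ τ in (0:ℝ)..y, τ ^ k * g τ) / y ^ (k + 1)

section HardyOperator

variable {g : ℝ → ℝ} {b : ℝ} (k : ℕ)

lemma continuousOn_integral_pow_mul (hb : 0 ≤ b) (hg : ContinuousOn g (Icc 0 b)) :
    ContinuousOn (fun z => ∫ τ in (0:ℝ)..z, τ ^ k * g τ) (Icc 0 b) := by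
  rw [← uIcc_of_le hb] at hg ⊢
  exact continuousOn_primitive_interval
    (ContinuousOn.integrableOn_compact isCompact_uIcc ((continuousOn_pow k).mul hg))

lemma hasDerivAt_integral_pow_mul (hg : ContinuousOn g (Icc 0 b)) {y : ℝ} (hy : y ∈ Ioo 0 b) :
    HasDerivAt (fun z => ∫ τ in (0:ℝ)..z, τ ^ k * g τ) (y ^ k * g y) y := by
  have hcont : ContinuousOn (fun τ => τ ^ k * g τ) (Icc 0 b) := (continuousOn_pow k).mul hg
  exact integral_hasDerivAt_right
    ((hcont.mono (Icc_subset_Icc_right hy.2.le)).intervalIntegrable_of_Icc hy.1.le)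
    ((hcont.mono Ioo_subset_Icc_self).stronglyMeasurableAtFilter isOpen_Ioo y hy)
    (hcont.continuousAt (Icc_mem_nhds hy.1 hy.2))

lemma continuousOn_hardyOperator (hb : 0 ≤ b) (hg : ContinuousOn g (Icc 0 b)) :
    ContinuousOn (hardyOperator k g) (Ioc 0 b) :=
  ((continuousOn_integral_pow_mul k hb hg).mono Ioc_subset_Icc_self).div
    (continuousOn_pow _) fun _ hy => pow_ne_zero _ hy.1.ne'

lemma abs_hardyOperator_le {M y : ℝ} (hy : 0 < y) (hM : ∀ τ ∈ Ioc 0 y, |g τ| ≤ M) :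
    |hardyOperator k g y| ≤ M := by
  have hP : ‖∫ τ in (0:ℝ)..y, τ ^ k * g τ‖ ≤ y ^ k * M * |y - 0| := by
    refine intervalIntegral.norm_integral_le_of_norm_le_const fun τ hτ => ?_
    rw [uIoc_of_le hy.le] at hτ
    rw [Real.norm_eq_abs, abs_mul, abs_of_nonneg (pow_nonneg hτ.1.le k)]
    exact mul_le_mul (pow_le_pow_left₀ hτ.1.le hτ.2 k) (hM τ hτ) (abs_nonneg _) (by positivity)
  rw [hardyOperator, abs_div, abs_of_pos (pow_pos hy _), div_le_iff₀ (pow_pos hy _)]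
  rw [Real.norm_eq_abs, sub_zero, abs_of_pos hy] at hP
  calc _ ≤ y ^ k * M * y := hP
    _ = M * y ^ (k + 1) := by ring

lemma hasDerivAt_neg_sq_integral_pow_mul_div (hg : ContinuousOn g (Icc 0 b)) {y : ℝ}
    (hy : y ∈ Ioo 0 b) :
    HasDerivAt (fun z => -(∫ τ in (0:ℝ)..z, τ ^ k * g τ) ^ 2 / z ^ (2 * k + 1))
      ((2 * k + 1) * hardyOperator k g y ^ 2 - 2 * hardyOperator k g y * g y) y := by
  have hP := hasDerivAt_integral_pow_mul k hg hy
  have hy0 : y ≠ 0 := hy.1.ne'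
  refine ((hP.pow 2).neg.div (hasDerivAt_pow (2 * k + 1) y) (pow_ne_zero _ hy0)).congr_deriv ?_
  simp only [hardyOperator, Pi.neg_apply, Pi.pow_apply]
  field_simp
  push_cast
  ring

lemma integral_sq_hardyOperator_le_add_boundary {ε : ℝ} (hε : 0 < ε) (hεb : ε ≤ b)
    (hg : ContinuousOn g (Icc 0 b)) :
    ∫ y in ε..b, hardyOperator k g y ^ 2
      ≤ 2 * (ε * hardyOperator k g ε ^ 2) + 4 * ∫ y in ε..b, g y ^ 2 := by
  set F := hardyOperator k g
  set B := fun z => -(∫ τ in (0:ℝ)..z, τ ^ k * g τ) ^ 2 / z ^ (2 * k + 1)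
  have hIcc : Icc ε b ⊆ Icc 0 b := Icc_subset_Icc_left hε.le
  have hF : ContinuousOn F (Icc ε b) :=
    (continuousOn_hardyOperator k (hε.le.trans hεb) hg).mono fun _ hy => ⟨hε.trans_le hy.1, hy.2⟩
  have hg' : ContinuousOn g (Icc ε b) := hg.mono hIcc
  have hB : ContinuousOn B (Icc ε b) :=
    (((continuousOn_integral_pow_mul k (hε.le.trans hεb) hg).mono hIcc).pow 2).neg.div
      (continuousOn_pow _) fun _ hy => pow_ne_zero _ (hε.trans_le hy.1).ne'
  have hint : ∀ {f : ℝ → ℝ}, ContinuousOn f (Icc ε b) → IntervalIntegrable f volume ε b :=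
    fun hf => hf.intervalIntegrable_of_Icc hεb
  have hFTC : ∫ y in ε..b, ((2 * k + 1) * F y ^ 2 - 2 * F y * g y) = B b - B ε :=
    integral_eq_sub_of_hasDeriv_right_of_le hεb hB
      (fun y hy => (hasDerivAt_neg_sq_integral_pow_mul_div k hg
        ⟨hε.trans hy.1, hy.2⟩).hasDerivWithinAt)
      (hint (by fun_prop))
  have hBb : B b ≤ 0 :=
    div_nonpos_of_nonpos_of_nonneg (neg_nonpos.2 (sq_nonneg _)) (pow_nonneg (hε.le.trans hεb) _)
  have hBε : B ε = -(ε * F ε ^ 2) := by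
    simp only [B, F, hardyOperator]
    field_simp
    ring
  have hpoint : ∀ y ∈ Icc ε b, F y ^ 2
      ≤ ((2 * k + 1) * F y ^ 2 - 2 * F y * g y) + F y ^ 2 / 2 + 2 * g y ^ 2 := fun y _ => by
    nlinarith [sq_nonneg (F y - 2 * g y), mul_nonneg (Nat.cast_nonneg (α := ℝ) k) (sq_nonneg (F y))]
  have hmono : ∫ y in ε..b, F y ^ 2 ≤ ∫ y in ε..b,
      (((2 * k + 1) * F y ^ 2 - 2 * F y * g y) + F y ^ 2 / 2 + 2 * g y ^ 2) :=
    integral_mono_on hεb (hint (by fun_prop)) (hint (by fun_prop)) hpoint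
  rw [integral_add (hint (by fun_prop)) (hint (by fun_prop)),
    integral_add (hint (by fun_prop)) (hint (by fun_prop)),
    hFTC, intervalIntegral.integral_div, intervalIntegral.integral_const_mul] at hmono
  linarith

lemma intervalIntegrable_sq_hardyOperator (hb : 0 ≤ b) (hg : ContinuousOn g (Icc 0 b)) :
    IntervalIntegrable (fun y => hardyOperator k g y ^ 2) volume 0 b := by
  obtain ⟨M, hM⟩ := isCompact_Icc.exists_bound_of_continuousOn hg
  rw [intervalIntegrable_iff_integrableOn_Ioc_of_le hb]
  refine ⟨((continuousOn_hardyOperator k hb hg).pow 2).aestronglyMeasurable measurableSet_Ioc,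
    .restrict_of_bounded (C := M ^ 2) measure_Ioc_lt_top
      (ae_restrict_of_forall_mem measurableSet_Ioc fun y hy => ?_)⟩
  rw [norm_pow, Real.norm_eq_abs]
  exact pow_le_pow_left₀ (abs_nonneg _) (abs_hardyOperator_le k hy.1
    fun τ hτ => hM τ ⟨hτ.1.le, hτ.2.trans hy.2⟩) 2

theorem integral_sq_hardyOperator_le (hb : 0 < b) (hg : ContinuousOn g (Icc 0 b)) :
    ∫ y in (0:ℝ)..b, hardyOperator k g y ^ 2 ≤ 4 * ∫ y in (0:ℝ)..b, g y ^ 2 := by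
  obtain ⟨M, hM⟩ := isCompact_Icc.exists_bound_of_continuousOn hg
  set F := hardyOperator k g
  have hbound : ∀ ε ∈ Ioc 0 b,
      ∫ y in ε..b, F y ^ 2 ≤ 2 * (ε * M ^ 2) + 4 * ∫ y in (0:ℝ)..b, g y ^ 2 := by
    intro ε hε
    have hFε : F ε ^ 2 ≤ M ^ 2 := by
      rw [← sq_abs]
      exact pow_le_pow_left₀ (abs_nonneg _)
        (abs_hardyOperator_le k hε.1 fun τ hτ => hM τ ⟨hτ.1.le, hτ.2.trans hε.2⟩) 2
    have hg2 : ∫ y in ε..b, g y ^ 2 ≤ ∫ y in (0:ℝ)..b, g y ^ 2 :=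
      integral_mono_interval hε.1.le hε.2 le_rfl (ae_of_all _ fun _ => sq_nonneg _)
        ((hg.pow 2).intervalIntegrable_of_Icc hb.le)
    calc ∫ y in ε..b, F y ^ 2 ≤ 2 * (ε * F ε ^ 2) + 4 * ∫ y in ε..b, g y ^ 2 :=
          integral_sq_hardyOperator_le_add_boundary k hε.1 hε.2 hg
      _ ≤ 2 * (ε * M ^ 2) + 4 * ∫ y in (0:ℝ)..b, g y ^ 2 := by
          gcongr
          exact hε.1.le
  have hleft : Tendsto (fun ε => ∫ y in ε..b, F y ^ 2) (𝓝[>] 0) (𝓝 (∫ y in (0:ℝ)..b, F y ^ 2)) :=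
    ((continuousOn_primitive_interval_left
      ((intervalIntegrable_iff' (μ := volume)).1 (intervalIntegrable_sq_hardyOperator k hb.le hg))
      0 left_mem_uIcc).mono_of_mem_nhdsWithin (by rw [uIcc_of_le hb.le]; exact Icc_mem_nhdsGT hb))
  have hright : Tendsto (fun ε : ℝ => 2 * (ε * M ^ 2) + 4 * ∫ y in (0:ℝ)..b, g y ^ 2) (𝓝[>] 0)
      (𝓝 (4 * ∫ y in (0:ℝ)..b, g y ^ 2)) :=
    tendsto_nhdsWithin_of_tendsto_nhds ((by fun_prop : Continuous fun ε : ℝ =>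
      2 * (ε * M ^ 2) + 4 * ∫ y in (0:ℝ)..b, g y ^ 2).tendsto' 0 _ (by simp))
  exact le_of_tendsto_of_tendsto hleft hright
    (eventually_of_mem (Ioc_mem_nhdsGT hb) hbound)

lemma integral_pow_succ_mul_deriv {g' : ℝ → ℝ} (hg : ContinuousOn g (Icc 0 b))
    (hg' : ContinuousOn g' (Icc 0 b)) (hderiv : ∀ x ∈ Ioo 0 b, HasDerivAt g (g' x) x) {y : ℝ}
    (hy : y ∈ Icc 0 b) :
    ∫ τ in (0:ℝ)..y, τ ^ (k + 1) * g' τ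
      = y ^ (k + 1) * g y - (k + 1) * ∫ τ in (0:ℝ)..y, τ ^ k * g τ := by
  have hsub : uIcc 0 y ⊆ Icc 0 b := by
    rw [uIcc_of_le hy.1]
    exact Icc_subset_Icc_right hy.2
  rw [integral_mul_deriv_eq_deriv_mul_of_hasDerivAt (u' := fun τ => (k + 1) * τ ^ k)
    (continuousOn_pow _) (hg.mono hsub) (fun x _ => by simpa using hasDerivAt_pow (k + 1) x)
    (fun x hx => hderiv x ?_) (by apply Continuous.intervalIntegrable; fun_prop)
    ((hg'.mono hsub).intervalIntegrable)]
  · simp [mul_assoc, intervalIntegral.integral_const_mul]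
  · rw [min_eq_left hy.1, max_eq_right hy.1] at hx
    exact ⟨hx.1, hx.2.trans_le hy.2⟩

lemma hasDerivAt_hardyOperator {g' : ℝ → ℝ} (hg : ContinuousOn g (Icc 0 b))
    (hg' : ContinuousOn g' (Icc 0 b)) (hderiv : ∀ x ∈ Ioo 0 b, HasDerivAt g (g' x) x) {y : ℝ}
    (hy : y ∈ Ioo 0 b) :
    HasDerivAt (hardyOperator k g) (hardyOperator (k + 1) g' y) y := by
  have hy0 : y ≠ 0 := hy.1.ne'
  refine ((hasDerivAt_integral_pow_mul k hg hy).div (hasDerivAt_pow (k + 1) y)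
    (pow_ne_zero _ hy0)).congr_deriv ?_
  rw [hardyOperator, integral_pow_succ_mul_deriv k hg hg' hderiv (Ioo_subset_Icc_self hy)]
  field_simp
  push_cast
  ring

end HardyOperator

theorem ContDiffOn.hasDerivAt_iteratedDerivWithin {𝕜 F : Type*} [NontriviallyNormedField 𝕜]
    [NormedAddCommGroup F] [NormedSpace 𝕜 F] {f : 𝕜 → F} {s : Set 𝕜} {n : WithTop ℕ∞} {k : ℕ}
    (hf : ContDiffOn 𝕜 n f s) (hk : (k : WithTop ℕ∞) < n) (hs : UniqueDiffOn 𝕜 s) {x : 𝕜}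
    (hx : s ∈ 𝓝 x) :
    HasDerivAt (iteratedDerivWithin k f s) (iteratedDerivWithin (k + 1) f s x) x := by
  rw [iteratedDerivWithin_succ]
  exact (hf.differentiableOn_iteratedDerivWithin hk hs x (mem_of_mem_nhds hx)).hasDerivWithinAt
    |>.hasDerivAt hx

theorem iteratedDeriv_div_eq_hardyOperator {s : ℕ} {u : ℝ → ℝ}
    (hu : ContDiffOn ℝ s u (Icc 0 1)) (hu0 : u 0 = 0) {k : ℕ} (hk : k < s) {y : ℝ}
    (hy : y ∈ Ioo 0 1) :
    iteratedDeriv k (fun z => u z / z) y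
      = hardyOperator k (iteratedDerivWithin (k + 1) u (Icc 0 1)) y := by
  have hcont : ∀ j ≤ s, ContinuousOn (iteratedDerivWithin j u (Icc 0 1)) (Icc 0 1) :=
    fun j hj => hu.continuousOn_iteratedDerivWithin (mod_cast hj) (uniqueDiffOn_Icc one_pos)
  have hderiv : ∀ j < s, ∀ x ∈ Ioo (0:ℝ) 1, HasDerivAt (iteratedDerivWithin j u (Icc 0 1))
      (iteratedDerivWithin (j + 1) u (Icc 0 1) x) x :=
    fun j hj x hx => hu.hasDerivAt_iteratedDerivWithin (mod_cast hj) (uniqueDiffOn_Icc one_pos)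
      (Icc_mem_nhds hx.1 hx.2)
  induction k generalizing y with
  | zero =>
    have hFTC := integral_eq_sub_of_hasDeriv_right_of_le hy.1.le
      ((hcont 0 (Nat.zero_le _)).mono (Icc_subset_Icc_right hy.2.le))
      (fun x hx => (hderiv 0 hk x ⟨hx.1, hx.2.trans hy.2⟩).hasDerivWithinAt)
      (((hcont 1 hk).mono (Icc_subset_Icc_right hy.2.le)).intervalIntegrable_of_Icc hy.1.le)
    rw [zero_add, iteratedDerivWithin_zero, hu0, sub_zero] at hFTC
    simp only [iteratedDeriv_zero, hardyOperator, pow_zero, one_mul, zero_add, pow_one, hFTC]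
  | succ k ih =>
    have hlocal : iteratedDeriv k (fun z => u z / z)
        =ᶠ[𝓝 y] hardyOperator k (iteratedDerivWithin (k + 1) u (Icc 0 1)) :=
      eventually_of_mem (Ioo_mem_nhds hy.1 hy.2) fun z hz => ih (by omega) hz
    rw [iteratedDeriv_succ, hlocal.deriv_eq]
    exact (hasDerivAt_hardyOperator k (hcont _ (by omega)) (hcont _ (by omega))
      (hderiv _ (by omega)) hy).deriv

theorem integral_sq_iteratedDeriv_div_le {s : ℕ} {u : ℝ → ℝ} (hu : ContDiffOn ℝ s u (Icc 0 1))
    (hu0 : u 0 = 0) {k : ℕ} (hk : k < s) :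
    ∫ x in (0:ℝ)..(1/2), (iteratedDeriv k (fun y => u y / y) x) ^ 2
      ≤ 4 * ∫ x in (0:ℝ)..1, (iteratedDerivWithin (k + 1) u (Icc 0 1) x) ^ 2 := by
  set g := iteratedDerivWithin (k + 1) u (Icc 0 1)
  have hg : ContinuousOn g (Icc 0 1) :=
    hu.continuousOn_iteratedDerivWithin (mod_cast hk) (uniqueDiffOn_Icc one_pos)
  calc ∫ x in (0:ℝ)..(1/2), (iteratedDeriv k (fun y => u y / y) x) ^ 2
      = ∫ x in (0:ℝ)..(1/2), hardyOperator k g x ^ 2 := by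
        refine integral_congr_ae (ae_of_all _ fun x hx => ?_)
        rw [uIoc_of_le (by norm_num)] at hx
        rw [iteratedDeriv_div_eq_hardyOperator hu hu0 hk ⟨hx.1, hx.2.trans_lt (by norm_num)⟩]
    _ ≤ 4 * ∫ x in (0:ℝ)..(1/2), g x ^ 2 :=
        integral_sq_hardyOperator_le k (by norm_num) (hg.mono (Icc_subset_Icc_right (by norm_num)))
    _ ≤ 4 * ∫ x in (0:ℝ)..1, g x ^ 2 := by
        gcongr
        exact integral_mono_interval le_rfl (by norm_num) (by norm_num)
          (ae_of_all _ fun _ => sq_nonneg _) ((hg.pow 2).intervalIntegrable_of_Icc zero_le_one)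

lemma iteratedDerivWithin_comp_one_sub_Icc (j : ℕ) (u : ℝ → ℝ) (x : ℝ) :
    iteratedDerivWithin j (fun z => u (1 - z)) (Icc 0 1) x
      = (-1) ^ j * iteratedDerivWithin j u (Icc 0 1) (1 - x) := by
  rw [iteratedDerivWithin_comp_const_sub, neg_Icc, vadd_Icc]
  norm_num

lemma integral_sq_iteratedDerivWithin_comp_one_sub (j : ℕ) (u : ℝ → ℝ) :
    ∫ x in (0:ℝ)..1, (iteratedDerivWithin j (fun z => u (1 - z)) (Icc 0 1) x) ^ 2
      = ∫ x in (0:ℝ)..1, (iteratedDerivWithin j u (Icc 0 1) x) ^ 2 := by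
  simp only [iteratedDerivWithin_comp_one_sub_Icc, mul_pow, ← pow_mul, pow_mul', neg_one_sq,
    one_pow, one_mul]
  simpa using integral_comp_sub_left (fun x => iteratedDerivWithin j u (Icc 0 1) x ^ 2) (1:ℝ)
    (a := 0) (b := 1)

theorem integral_sq_iteratedDeriv_div_one_sub_le {s : ℕ} {u : ℝ → ℝ}
    (hu : ContDiffOn ℝ s u (Icc 0 1)) (hu1 : u 1 = 0) {k : ℕ} (hk : k < s) :
    ∫ x in (1/2:ℝ)..1, (iteratedDeriv k (fun y => u y / (1 - y)) x) ^ 2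
      ≤ 4 * ∫ x in (0:ℝ)..1, (iteratedDerivWithin (k + 1) u (Icc 0 1) x) ^ 2 := by
  set v := fun z => u (1 - z)
  have hv : ContDiffOn ℝ s v (Icc 0 1) :=
    hu.comp (by fun_prop) fun z hz => ⟨by linarith [hz.2], by linarith [hz.1]⟩
  have hv0 : v 0 = 0 := by simp [v, hu1]
  have hreflect : (fun y => u y / (1 - y)) = fun y => (fun z => v z / z) (1 - y) := by
    funext y
    simp [v]
  rw [hreflect, iteratedDeriv_comp_const_sub k (fun z => v z / z) 1]
  simp only [smul_eq_mul, mul_pow, ← pow_mul, pow_mul', neg_one_sq, one_pow, one_mul]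
  rw [integral_comp_sub_left (fun x => iteratedDeriv k (fun z => v z / z) x ^ 2), sub_self,
    show (1:ℝ) - 1 / 2 = 1 / 2 by norm_num, ← integral_sq_iteratedDerivWithin_comp_one_sub]
  exact integral_sq_iteratedDeriv_div_le hv hv0 hk

theorem higher_order_hardy_general (s : ℕ) :
    ∃ C : ℝ, 0 < C ∧ ∀ u : ℝ → ℝ,
      ContDiffOn ℝ s u (Set.Icc 0 1) → u 0 = 0 → u 1 = 0 →
      ∑ k ∈ Finset.range s,
        ((∫ x in (0:ℝ)..(1/2), (iteratedDeriv k (fun y => u y / y) x) ^ 2) +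
         (∫ x in (1/2:ℝ)..1, (iteratedDeriv k (fun y => u y / (1 - y)) x) ^ 2))
      ≤ C * ∑ k ∈ Finset.range (s + 1),
          ∫ x in (0:ℝ)..1, (iteratedDerivWithin k u (Set.Icc 0 1) x) ^ 2 := by
  refine ⟨8, by norm_num, fun u hu hu0 hu1 => ?_⟩
  calc _ ≤ ∑ k ∈ Finset.range s,
          8 * ∫ x in (0:ℝ)..1, (iteratedDerivWithin (k + 1) u (Icc 0 1) x) ^ 2 := by
        refine Finset.sum_le_sum fun k hk => ?_
        have hleft := integral_sq_iteratedDeriv_div_le hu hu0 (Finset.mem_range.1 hk)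
        have hright := integral_sq_iteratedDeriv_div_one_sub_le hu hu1 (Finset.mem_range.1 hk)
        linarith
    _ ≤ 8 * ∑ k ∈ Finset.range (s + 1),
          ∫ x in (0:ℝ)..1, (iteratedDerivWithin k u (Icc 0 1) x) ^ 2 := by
        rw [← Finset.mul_sum, Finset.sum_range_succ']
        have h0 : 0 ≤ ∫ x in (0:ℝ)..1, (iteratedDerivWithin 0 u (Icc 0 1) x) ^ 2 :=
          integral_nonneg zero_le_one fun _ _ => sq_nonneg _
        linarith

/-- Higher-order Hardy-type inequality (Lemma 3.1). -/
theorem higher_order_hardy (s : ℕ) (hs : 1 ≤ s) :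
    ∃ C : ℝ, 0 < C ∧ ∀ u : ℝ → ℝ,
      ContDiffOn ℝ s u (Set.Icc 0 1) → u 0 = 0 → u 1 = 0 →
      ∑ k ∈ Finset.range s,
        ((∫ x in (0:ℝ)..(1/2), (iteratedDeriv k (fun y => u y / y) x) ^ 2) +
         (∫ x in (1/2:ℝ)..1, (iteratedDeriv k (fun y => u y / (1 - y)) x) ^ 2))
      ≤ C * ∑ k ∈ Finset.range (s + 1),
          ∫ x in (0:ℝ)..1, (iteratedDerivWithin k u (Set.Icc 0 1) x) ^ 2 :=
  higher_order_hardy_general s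
end

section
/- Damped-equation sup bound (Lemma 3.2, Banach-valued form): Let E be a real normed vector space, let κ > 0 and T > 0, let g : [0,T] → E be continuous, and let f : [0,T] → E be differentiable with f(t) + κ f'(t) = g(t) for all t ∈ [0,T]. Then for every t ∈ [0,T], ‖f(t)‖ ≤ max( ‖f(0)‖ , sup_{s ∈ [0,T]} ‖g(s)‖ ). -/
open scoped Topology


/-- Damped-equation sup bound (Lemma 3.2, Banach-valued form). -/
theorem damped_sup_bound (E : Type*) [NormedAddCommGroup E] [NormedSpace ℝ E]
    (κ T : ℝ) (hκ : 0 < κ) (hT : 0 < T)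
    (g f f' : ℝ → E)
    (hg : ContinuousOn g (Set.Icc 0 T))
    (hf : ∀ t ∈ Set.Icc 0 T, HasDerivWithinAt f (f' t) (Set.Icc 0 T) t)
    (heq : ∀ t ∈ Set.Icc 0 T, f t + κ • f' t = g t) :
    ∀ t ∈ Set.Icc 0 T, ‖f t‖ ≤ max ‖f 0‖ (⨆ s : Set.Icc (0:ℝ) T, ‖g s‖) := by
  set M : ℝ := ⨆ s : Set.Icc (0:ℝ) T, ‖g s‖ with hMdef
  have hbdd : BddAbove (Set.range fun s : Set.Icc (0:ℝ) T => ‖g ↑s‖) := by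
    have h1 : BddAbove ((fun t => ‖g t‖) '' Set.Icc 0 T) :=
      (isCompact_Icc.image_of_continuousOn hg.norm).bddAbove
    rwa [show ((fun t => ‖g t‖) '' Set.Icc 0 T) = Set.range fun s : Set.Icc (0:ℝ) T => ‖g ↑s‖
      from (Set.range_restrict _ _).symm] at h1
  have hgM : ∀ x ∈ Set.Icc (0:ℝ) T, ‖g x‖ ≤ M := fun x hx => le_ciSup hbdd ⟨x, hx⟩
  have hfc : ContinuousOn f (Set.Icc 0 T) := fun t ht => (hf t ht).continuousWithinAt
  intro t ht
  refine le_of_forall_pos_le_add fun ε hε => ?_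
  have key : ∀ ⦃x⦄, x ∈ Set.Icc (0:ℝ) T → ‖f x‖ ≤ (fun _ : ℝ => max ‖f 0‖ M + ε) x := by
    apply image_norm_le_of_liminf_right_slope_norm_lt_deriv_boundary
      (f' := fun x => (M - ‖f x‖) / κ) (B := fun _ : ℝ => max ‖f 0‖ M + ε) (B' := fun _ => 0) hfc
    · -- slope estimate
      intro x hx r hr
      have hxI : x ∈ Set.Icc (0:ℝ) T := ⟨hx.1, hx.2.le⟩
      set v := f' x with hv
      have hvI : HasDerivWithinAt f v (Set.Ici x) x := by
        refine (hf x hxI).mono_of_mem_nhdsWithin ?_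
        have h2 : Set.Icc x T ∈ 𝓝[Set.Ici x] x := by
          rw [show Set.Icc x T = Set.Ici x ∩ Set.Iic T from (Set.Ici_inter_Iic).symm]
          exact Filter.inter_mem self_mem_nhdsWithin
            (mem_nhdsWithin_of_mem_nhds (Iic_mem_nhds hx.2))
        exact Filter.mem_of_superset h2 (Set.Icc_subset_Icc hx.1 le_rfl)
      have hslope : Filter.Tendsto (slope f x) (𝓝[>] x) (𝓝 v) := by
        have h3 := hasDerivWithinAt_iff_tendsto_slope.1 hvI.Ioi_of_Ici
        rwa [Set.diff_singleton_eq_self (by simp)] at h3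
      set ε' : ℝ := r - (M - ‖f x‖) / κ with hε'def
      have hε' : 0 < ε' := by simp [hε'def]; linarith
      have hev1 : ∀ᶠ z in 𝓝[>] x, ‖slope f x z - v‖ < ε' := by
        have := hslope.eventually (Metric.ball_mem_nhds v hε')
        filter_upwards [this] with z hz
        simpa [dist_eq_norm] using hz
      have hev2 : ∀ᶠ z in 𝓝[>] x, z ∈ Set.Ioo x (x + κ) :=
        Filter.eventually_mem_set.2 (Ioo_mem_nhdsGT_of_mem ⟨le_rfl, by linarith⟩)
      have hκv : κ • v = g x - f x := by
        have h4 := heq x hxI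
        rw [← h4]; abel
      refine ((hev1.and hev2).frequently).mono ?_
      rintro z ⟨hz1, hz2, hz3⟩
      have hh : 0 < z - x := by linarith
      have hhκ : z - x < κ := by linarith
      set h : ℝ := z - x with hhdef
      clear_value h ε' v
      have hsm : f z - f x = h • slope f x z := by
        rw [hhdef, slope_def_module, smul_smul,
          mul_inv_cancel₀ (by linarith : z - x ≠ 0), one_smul]
      have hdecomp : f z = (f x + h • v) + h • (slope f x z - v) := by
        rw [smul_sub]
        have : f z = f x + (f z - f x) := by abel
        rw [this, hsm]; abel
      have hconv : ‖f x + h • v‖ ≤ (1 - h / κ) * ‖f x‖ + (h / κ) * ‖g x‖ := by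
        have he : f x + h • v = (1 - h / κ) • f x + (h / κ) • g x := by
          have h5 : h • v = (h / κ) • (κ • v) := by
            rw [smul_smul]; congr 1; field_simp
          rw [h5, hκv, smul_sub, sub_smul, one_smul]; abel
        have hd1 : (0:ℝ) ≤ 1 - h / κ := by
          rw [sub_nonneg, div_le_one hκ]; linarith
        have hd2 : (0:ℝ) ≤ h / κ := by positivity
        rw [he]
        refine (norm_add_le _ _).trans ?_
        rw [norm_smul, norm_smul, Real.norm_eq_abs, Real.norm_eq_abs,
          abs_of_nonneg hd1, abs_of_nonneg hd2]
      have hnorm2 : ‖h • (slope f x z - v)‖ < h * ε' := by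
        rw [norm_smul, Real.norm_eq_abs, abs_of_pos hh]
        exact mul_lt_mul_of_pos_left hz1 hh
      have hfz : ‖f z‖ - ‖f x‖ < h * r := by
        have h6 : ‖f z‖ ≤ ‖f x + h • v‖ + ‖h • (slope f x z - v)‖ := by
          rw [hdecomp] at *; exact norm_add_le _ _
        have h7 : ‖g x‖ ≤ M := hgM x hxI
        have h8 : 0 < h / κ := by positivity
        have e1 : ‖f z‖ < (1 - h / κ) * ‖f x‖ + (h / κ) * ‖g x‖ + h * ε' := by linarith
        have e2 : (h / κ) * ‖g x‖ ≤ (h / κ) * M := mul_le_mul_of_nonneg_left h7 h8.le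
        have e3 : (1 - h / κ) * ‖f x‖ + (h / κ) * M + h * ε' - ‖f x‖ = h * r := by
          rw [hε'def]; field_simp; ring
        linarith
      show slope (norm ∘ f) x z < r
      rw [slope_def_field]
      rw [div_lt_iff₀ (by linarith : (0:ℝ) < z - x)]
      calc (norm ∘ f) z - (norm ∘ f) x = ‖f z‖ - ‖f x‖ := rfl
        _ < h * r := hfz
        _ = r * (z - x) := by rw [hhdef]; ring
    · -- initial bound
      show ‖f 0‖ ≤ max ‖f 0‖ M + ε
      have := le_max_left ‖f 0‖ M
      linarith
    · exact continuousOn_const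
    · intro x _
      exact hasDerivWithinAt_const x _ _
    · -- strict decrease at the boundary
      intro x _ hfx
      have hfx' : ‖f x‖ = max ‖f 0‖ M + ε := hfx
      show (M - ‖f x‖) / κ < 0
      have : M ≤ max ‖f 0‖ M := le_max_right _ _
      have hneg : M - ‖f x‖ < 0 := by rw [hfx']; linarith
      exact div_neg_of_neg_of_pos hneg hκ
  exact key ht
end

section
/- Weighted Sobolev embedding ((2.1), case p = 2): There exists a constant C > 0 such that for every continuously differentiable function F : [0,1] → ℝ, ∫_{0}^{1} F(x)² dx ≤ C ∫_{0}^{1} d(x)² ( F(x)² + F'(x)² ) dx. -/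
/-!
Multiplier method. For `φ` vanishing at `0` and `1`, `∫₀¹ (φ F²)' = 0`. Choose
`φ' = 1 - 30 (x(1-x))²`, so that `1 - φ' ≤ 30 d²`, and note `|φ| ≤ 2d`. Then pointwise
`F² = (1 - φ') F² + (φ F²)' - 2 φ F F'`, and Young's inequality `-2φFF' ≤ F²/2 + 2φ²F'²`
gives `F² ≤ 60 d² (F² + F'²) + 2 (φ F²)'`; integrating yields the claim with `C = 60`.
-/

open Set MeasureTheory intervalIntegral

/-- The primitive of `1 - 30 (x(1-x))²` vanishing at `0`; it also vanishes at `1` because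
`∫₀¹ x²(1-x)² = 1/30`. -/
def sobolevMultiplier (x : ℝ) : ℝ :=
  x * (1 - x) * (1 - 2 * x) * (1 + 3 * (x * (1 - x)))

@[fun_prop]
lemma continuous_sobolevMultiplier : Continuous sobolevMultiplier := by
  unfold sobolevMultiplier
  fun_prop

lemma hasDerivAt_sobolevMultiplier (x : ℝ) :
    HasDerivAt sobolevMultiplier (1 - 30 * (x * (1 - x)) ^ 2) x := by
  have h : HasDerivAt (fun y : ℝ => y - 10 * y ^ 3 + 15 * y ^ 4 - 6 * y ^ 5)
      (1 - 10 * (3 * x ^ 2) + 15 * (4 * x ^ 3) - 6 * (5 * x ^ 4)) x := by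
    refine ((((hasDerivAt_id x).sub ((hasDerivAt_pow 3 x).const_mul 10)).add
      ((hasDerivAt_pow 4 x).const_mul 15)).sub ((hasDerivAt_pow 5 x).const_mul 6)).congr_deriv ?_
    norm_num
  convert h using 1
  · funext y
    simp only [sobolevMultiplier]
    ring
  · ring

lemma mul_one_sub_le_min {x : ℝ} (hx : x ∈ Icc (0 : ℝ) 1) : x * (1 - x) ≤ min x (1 - x) :=
  le_min (by nlinarith [hx.1, hx.2]) (by nlinarith [hx.1, hx.2])

lemma sobolevMultiplier_sq_le {x : ℝ} (hx : x ∈ Icc (0 : ℝ) 1) :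
    sobolevMultiplier x ^ 2 ≤ 4 * min x (1 - x) ^ 2 := by
  obtain ⟨hx0, hx1⟩ := hx
  have hs0 : 0 ≤ x * (1 - x) := mul_nonneg hx0 (by linarith)
  have hbound : |sobolevMultiplier x| ≤ 2 * (x * (1 - x)) := by
    rw [sobolevMultiplier, abs_mul, abs_mul, abs_of_nonneg hs0,
      abs_of_nonneg (show 0 ≤ 1 + 3 * (x * (1 - x)) by positivity)]
    have h2x : |1 - 2 * x| ≤ 1 := abs_le.2 ⟨by linarith, by linarith⟩
    have hq : 1 + 3 * (x * (1 - x)) ≤ 2 := by nlinarith [sq_nonneg (x - 1 / 2)]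
    calc x * (1 - x) * |1 - 2 * x| * (1 + 3 * (x * (1 - x)))
        ≤ x * (1 - x) * 1 * 2 := by gcongr
      _ = 2 * (x * (1 - x)) := by ring
  calc sobolevMultiplier x ^ 2 = |sobolevMultiplier x| ^ 2 := (sq_abs _).symm
    _ ≤ (2 * min x (1 - x)) ^ 2 := by gcongr; linarith [mul_one_sub_le_min ⟨hx0, hx1⟩]
    _ = 4 * min x (1 - x) ^ 2 := by ring

/-- The last summand is `(φ F²)'` at a point where `F = f` and `F' = g`. -/
lemma sq_le_weighted_add_multiplier {x : ℝ} (hx : x ∈ Icc (0 : ℝ) 1) (f g : ℝ) :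
    f ^ 2 ≤ 60 * (min x (1 - x) ^ 2 * (f ^ 2 + g ^ 2))
      + 2 * ((1 - 30 * (x * (1 - x)) ^ 2) * f ^ 2 + 2 * sobolevMultiplier x * f * g) := by
  have hs := mul_one_sub_le_min hx
  have hs0 : 0 ≤ x * (1 - x) := mul_nonneg hx.1 (by linarith [hx.2])
  have hφ := sobolevMultiplier_sq_le hx
  nlinarith [sq_nonneg (f + 2 * sobolevMultiplier x * g), mul_le_mul hs hs hs0 (hs0.trans hs),
    sq_nonneg f, mul_nonneg (sq_nonneg g) (sub_nonneg.2 hφ)]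

lemma integral_deriv_mul_sq_eq_sub {F F' φ φ' : ℝ → ℝ} {a b : ℝ} (hab : a ≤ b)
    (hF : ContinuousOn F (Icc a b)) (hF' : ContinuousOn F' (Icc a b))
    (hderiv : ∀ x ∈ Ioo a b, HasDerivAt F (F' x) x)
    (hφ : ∀ x, HasDerivAt φ (φ' x) x) (hφ' : Continuous φ') :
    ∫ x in a..b, (φ' x * F x ^ 2 + 2 * φ x * F x * F' x) = φ b * F b ^ 2 - φ a * F a ^ 2 := by
  have hφc : Continuous φ := continuous_iff_continuousAt.2 fun x => (hφ x).continuousAt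
  refine integral_eq_sub_of_hasDerivAt_of_le hab (hφc.continuousOn.mul (hF.pow 2))
    (fun x hx => ((hφ x).mul ((hderiv x hx).pow 2)).congr_deriv (by simp only [Pi.pow_apply]; ring)) ?_
  exact ContinuousOn.intervalIntegrable_of_Icc hab <|
    (hφ'.continuousOn.mul (hF.pow 2)).add
      (((continuousOn_const.mul hφc.continuousOn).mul hF).mul hF')

lemma integral_sq_le_weighted {F F' : ℝ → ℝ} (hF : ContinuousOn F (Icc 0 1))
    (hF' : ContinuousOn F' (Icc 0 1)) (hderiv : ∀ x ∈ Ioo (0 : ℝ) 1, HasDerivAt F (F' x) x) :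
    ∫ x in (0 : ℝ)..1, F x ^ 2 ≤
      60 * ∫ x in (0 : ℝ)..1, min x (1 - x) ^ 2 * (F x ^ 2 + F' x ^ 2) := by
  have hzero : ∫ x in (0 : ℝ)..1,
      ((1 - 30 * (x * (1 - x)) ^ 2) * F x ^ 2 + 2 * sobolevMultiplier x * F x * F' x) = 0 := by
    rw [integral_deriv_mul_sq_eq_sub zero_le_one hF hF' hderiv hasDerivAt_sobolevMultiplier
      (by fun_prop)]
    simp [sobolevMultiplier]
  have hint : ∀ {u : ℝ → ℝ}, ContinuousOn u (Icc 0 1) → IntervalIntegrable u volume 0 1 :=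
    ContinuousOn.intervalIntegrable_of_Icc zero_le_one
  calc ∫ x in (0 : ℝ)..1, F x ^ 2
      ≤ ∫ x in (0 : ℝ)..1, (60 * (min x (1 - x) ^ 2 * (F x ^ 2 + F' x ^ 2))
          + 2 * ((1 - 30 * (x * (1 - x)) ^ 2) * F x ^ 2 + 2 * sobolevMultiplier x * F x * F' x)) :=
        integral_mono_on zero_le_one (hint (by fun_prop)) (hint (by fun_prop))
          fun x hx => sq_le_weighted_add_multiplier hx (F x) (F' x)
    _ = 60 * ∫ x in (0 : ℝ)..1, min x (1 - x) ^ 2 * (F x ^ 2 + F' x ^ 2) := by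
        rw [integral_add (hint (by fun_prop)) (hint (by fun_prop)),
          intervalIntegral.integral_const_mul, intervalIntegral.integral_const_mul, hzero,
          mul_zero, add_zero]

/-- Weighted Sobolev embedding ((2.1), case p = 2). -/
theorem weighted_sobolev_embedding :
    ∃ C : ℝ, 0 < C ∧ ∀ F : ℝ → ℝ, ContDiffOn ℝ 1 F (Set.Icc 0 1) →
      (∫ x in (0:ℝ)..1, (F x) ^ 2) ≤
        C * ∫ x in (0:ℝ)..1,
          (min x (1 - x)) ^ 2 * ((F x) ^ 2 + (derivWithin F (Set.Icc 0 1) x) ^ 2) := by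
  refine ⟨60, by norm_num, fun F hF => integral_sq_le_weighted hF.continuousOn
    (hF.continuousOn_derivWithin (uniqueDiffOn_Icc zero_lt_one) le_rfl) fun x hx => ?_⟩
  exact (hF.differentiableOn one_ne_zero x (Ioo_subset_Icc_self hx)).hasDerivWithinAt.hasDerivAt
    (Icc_mem_nhds hx.1 hx.2)
end

section
/- Pointwise bound ((3.4), left half): Let s ≥ 1 be an integer and let u : ℝ → ℝ be (s+1) times continuously differentiable on [0,1] with u(0) = 0. Then for every x ∈ (0,1], |(d^s/dx^s)( u(x)/x )| ≤ s! · x^{-1} · ∫_{0}^{x} |u^{(s+1)}(y)| dy. -/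
open Set MeasureTheory
open scoped Interval

/-!
By induction on `k`, `(d/dx)^k (u x / x) = x^{-(k+1)} ∫_0^x y^k u^{(k+1)}(y) dy` on `(0, 1]`:
for `k = 0` this is `u x = ∫_0^x u'` (using `u 0 = 0`), and differentiating the right-hand side
by the product rule and the fundamental theorem of calculus gives the next case after one
integration by parts of `∫_0^x y^(k+1) u^{(k+2)}`. Bounding `y^k ≤ x^k` under the integral then
gives the estimate with constant `1 ≤ s!`.
-/

noncomputable def scaledMoment (k : ℕ) (f : ℝ → ℝ) (x : ℝ) : ℝ :=
  (x ^ (k + 1))⁻¹ * ∫ y in (0:ℝ)..x, y ^ k * f y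

theorem ContDiffOn.hasDerivWithinAt_iteratedDerivWithin {𝕜 F : Type*}
    [NontriviallyNormedField 𝕜] [NormedAddCommGroup F] [NormedSpace 𝕜 F]
    {n : WithTop ℕ∞} {k : ℕ} {u : 𝕜 → F} {s : Set 𝕜} (hu : ContDiffOn 𝕜 n u s) (hk : k < n)
    (hs : UniqueDiffOn 𝕜 s) {y : 𝕜} (hy : y ∈ s) :
    HasDerivWithinAt (iteratedDerivWithin k u s) (iteratedDerivWithin (k + 1) u s y) s y := by
  rw [iteratedDerivWithin_succ]
  exact (hu.differentiableOn_iteratedDerivWithin hk hs y hy).hasDerivWithinAt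

theorem integral_pow_succ_mul_eq {f f' : ℝ → ℝ} {x : ℝ} (k : ℕ)
    (hf : ∀ y ∈ [[0, x]], HasDerivWithinAt f (f' y) [[0, x]] y)
    (hf' : IntervalIntegrable f' volume 0 x) :
    ∫ y in (0:ℝ)..x, y ^ (k + 1) * f' y =
      x ^ (k + 1) * f x - (k + 1) * ∫ y in (0:ℝ)..x, y ^ k * f y := by
  have hpow : ∀ y ∈ [[0, x]], HasDerivWithinAt (fun y : ℝ => y ^ (k + 1))
      ((k + 1) * y ^ k) [[0, x]] y := fun y _ => by
    simpa using (hasDerivAt_pow (k + 1) y).hasDerivWithinAt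
  rw [intervalIntegral.integral_mul_deriv_eq_deriv_mul_of_hasDerivWithinAt hpow hf
    ((continuous_const.mul (continuous_pow k)).intervalIntegrable 0 x) hf',
    ← intervalIntegral.integral_const_mul]
  simp only [ne_eq, add_eq_zero, one_ne_zero, and_false, not_false_eq_true, zero_pow, zero_mul,
    sub_zero, mul_assoc]

theorem hasDerivWithinAt_scaledMoment {f f' : ℝ → ℝ} {b x : ℝ} (k : ℕ)
    (hf : ∀ y ∈ Icc 0 b, HasDerivWithinAt f (f' y) (Icc 0 b) y)
    (hf' : ContinuousOn f' (Icc 0 b)) (hx : x ∈ Ioc 0 b) :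
    HasDerivWithinAt (scaledMoment k f) (scaledMoment (k + 1) f' x) (Icc 0 b) x := by
  have hsub : [[0, x]] ⊆ Icc 0 b := by
    rw [uIcc_of_le hx.1.le]; exact Icc_subset_Icc_right hx.2
  have hcont : ContinuousOn (fun y => y ^ k * f y) (Icc 0 b) :=
    (continuousOn_pow k).mul fun y hy => (hf y hy).continuousWithinAt
  have hxb : Fact (x ∈ Icc 0 b) := ⟨Ioc_subset_Icc_self hx⟩
  have hI : HasDerivWithinAt (fun z => ∫ y in (0:ℝ)..z, y ^ k * f y) (x ^ k * f x) (Icc 0 b) x :=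
    intervalIntegral.integral_hasDerivWithinAt_right (hcont.mono hsub).intervalIntegrable
      (hcont.stronglyMeasurableAtFilter_nhdsWithin measurableSet_Icc x) (hcont x hxb.out)
  have hinv : HasDerivAt (fun z : ℝ => (z ^ (k + 1))⁻¹)
      (-((k + 1) * x ^ k) / (x ^ (k + 1)) ^ 2) x := by
    simpa using (hasDerivAt_pow (k + 1) x).fun_inv (pow_ne_zero _ hx.1.ne')
  have hparts := integral_pow_succ_mul_eq k (fun y hy => (hf y (hsub hy)).mono hsub)
    (hf'.mono hsub).intervalIntegrable
  refine (hinv.hasDerivWithinAt.mul hI).congr_deriv ?_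
  have hx0 : x ≠ 0 := hx.1.ne'
  rw [scaledMoment, hparts]
  field_simp
  ring

theorem div_self_eq_scaledMoment_zero {f f' : ℝ → ℝ} {b x : ℝ} (hf0 : f 0 = 0)
    (hf : ∀ y ∈ Icc 0 b, HasDerivWithinAt f (f' y) (Icc 0 b) y)
    (hf' : ContinuousOn f' (Icc 0 b)) (hx : x ∈ Ioc 0 b) :
    f x / x = scaledMoment 0 f' x := by
  have hsub : Icc 0 x ⊆ Icc 0 b := Icc_subset_Icc_right hx.2
  have hFTC : ∫ y in (0:ℝ)..x, f' y = f x - f 0 :=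
    intervalIntegral.integral_eq_sub_of_hasDeriv_right_of_le hx.1.le
      (fun y hy => (hf y (hsub hy)).continuousWithinAt.mono hsub)
      (fun y hy => ((hf y (hsub (Ioo_subset_Icc_self hy))).hasDerivAt
        (Icc_mem_nhds hy.1 (hy.2.trans_le hx.2))).hasDerivWithinAt)
      ((hf'.mono hsub).intervalIntegrable_of_Icc hx.1.le)
  simp [scaledMoment, hFTC, hf0, div_eq_inv_mul]

theorem iteratedDerivWithin_div_eqOn_scaledMoment {u : ℝ → ℝ} {b : ℝ} (k : ℕ)
    (hu : ContDiffOn ℝ (k + 1) u (Icc 0 b)) (hu0 : u 0 = 0) :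
    EqOn (iteratedDerivWithin k (fun y => u y / y) (Ioc 0 b))
      (scaledMoment k (iteratedDerivWithin (k + 1) u (Icc 0 b))) (Ioc 0 b) := by
  induction k with
  | zero =>
    intro x hx
    have hb : UniqueDiffOn ℝ (Icc 0 b) := uniqueDiffOn_Icc (hx.1.trans_le hx.2)
    rw [iteratedDerivWithin_zero]
    refine div_self_eq_scaledMoment_zero hu0 (fun y hy => ?_)
      (hu.continuousOn_iteratedDerivWithin le_rfl hb) hx
    simpa using hu.hasDerivWithinAt_iteratedDerivWithin (k := 0) (by norm_num) hb hy
  | succ k ih =>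
    intro x hx
    have hb : UniqueDiffOn ℝ (Icc 0 b) := uniqueDiffOn_Icc (hx.1.trans_le hx.2)
    have ih := ih (hu.of_le (by norm_cast; omega))
    rw [iteratedDerivWithin_succ, derivWithin_congr ih (ih hx)]
    refine ((hasDerivWithinAt_scaledMoment k (fun y hy => ?_)
      (hu.continuousOn_iteratedDerivWithin le_rfl hb) hx).mono Ioc_subset_Icc_self).derivWithin
      (uniqueDiffOn_Ioc 0 b x hx)
    exact hu.hasDerivWithinAt_iteratedDerivWithin (by norm_cast; omega) hb hy

theorem abs_scaledMoment_le {g : ℝ → ℝ} {x : ℝ} (k : ℕ) (hx : 0 < x)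
    (hg : IntervalIntegrable g volume 0 x) :
    |scaledMoment k g x| ≤ x⁻¹ * ∫ y in (0:ℝ)..x, |g y| := by
  have hpow : ContinuousOn (fun y : ℝ => y ^ k) [[0, x]] := continuousOn_pow k
  have hmoment : |∫ y in (0:ℝ)..x, y ^ k * g y| ≤ x ^ k * ∫ y in (0:ℝ)..x, |g y| :=
    calc |∫ y in (0:ℝ)..x, y ^ k * g y|
        ≤ ∫ y in (0:ℝ)..x, |y ^ k * g y| := intervalIntegral.abs_integral_le_integral_abs hx.le
      _ ≤ ∫ y in (0:ℝ)..x, x ^ k * |g y| := by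
        refine intervalIntegral.integral_mono_on hx.le (hg.continuousOn_mul hpow).abs
          (hg.abs.continuousOn_mul continuousOn_const) fun y hy => ?_
        rw [abs_mul, abs_pow, abs_of_nonneg hy.1]
        exact mul_le_mul_of_nonneg_right (pow_le_pow_left₀ hy.1 hy.2 k) (abs_nonneg _)
      _ = x ^ k * ∫ y in (0:ℝ)..x, |g y| := intervalIntegral.integral_const_mul _ _
  calc |scaledMoment k g x|
      = (x ^ (k + 1))⁻¹ * |∫ y in (0:ℝ)..x, y ^ k * g y| := by
        rw [scaledMoment, abs_mul, abs_inv, abs_pow, abs_of_pos hx]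
    _ ≤ (x ^ (k + 1))⁻¹ * (x ^ k * ∫ y in (0:ℝ)..x, |g y|) := by gcongr
    _ = x⁻¹ * ∫ y in (0:ℝ)..x, |g y| := by
        rw [pow_succ]
        field_simp

theorem pointwise_bound_left_general (s : ℕ) (u : ℝ → ℝ)
    (hu : ContDiffOn ℝ (s + 1) u (Set.Icc 0 1)) (hu0 : u 0 = 0) :
    ∀ x ∈ Set.Ioc (0:ℝ) 1,
      |iteratedDerivWithin s (fun y => u y / y) (Set.Ioc 0 1) x| ≤
        (Nat.factorial s : ℝ) * x⁻¹ *
          ∫ y in (0:ℝ)..x, |iteratedDerivWithin (s + 1) u (Set.Icc 0 1) y| := by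
  intro x hx
  have hcont : ContinuousOn (iteratedDerivWithin (s + 1) u (Icc 0 1)) (Icc 0 x) :=
    (hu.continuousOn_iteratedDerivWithin le_rfl (uniqueDiffOn_Icc zero_lt_one)).mono
      (Icc_subset_Icc_right hx.2)
  rw [iteratedDerivWithin_div_eqOn_scaledMoment s hu hu0 hx, mul_assoc]
  calc _ ≤ x⁻¹ * ∫ y in (0:ℝ)..x, |iteratedDerivWithin (s + 1) u (Icc 0 1) y| :=
        abs_scaledMoment_le s hx.1 (hcont.intervalIntegrable_of_Icc hx.1.le)
    _ ≤ _ := le_mul_of_one_le_left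
        (mul_nonneg (inv_nonneg.2 hx.1.le)
          (intervalIntegral.integral_nonneg hx.1.le fun _ _ => abs_nonneg _))
        (by exact_mod_cast s.factorial_pos)

/-- Pointwise bound ((3.4), left half). -/
theorem pointwise_bound_left (s : ℕ) (hs : 1 ≤ s) (u : ℝ → ℝ)
    (hu : ContDiffOn ℝ (s + 1) u (Set.Icc 0 1)) (hu0 : u 0 = 0) :
    ∀ x ∈ Set.Ioc (0:ℝ) 1,
      |iteratedDerivWithin s (fun y => u y / y) (Set.Ioc 0 1) x| ≤
        (Nat.factorial s : ℝ) * x⁻¹ *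
          ∫ y in (0:ℝ)..x, |iteratedDerivWithin (s + 1) u (Set.Icc 0 1) y| :=
  pointwise_bound_left_general s u hu hu0
end

section
/- Weighted degenerate norm identity ((6.38)): Let ρ₀ : ℝ → ℝ be twice continuously differentiable on [0,1] with ρ₀ ≥ 0 on [0,1] and ρ₀(0) = ρ₀(1) = 0, and let w : ℝ → ℝ be twice continuously differentiable on [0,1]. Then ∫_{0}^{1} ( ρ₀^{3/2} w'' + 2 ρ₀^{1/2} ρ₀' w' )² dx = ∫_{0}^{1} ρ₀³ (w'')² dx − 2 ∫_{0}^{1} ρ₀'' ρ₀² (w')² dx. -/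
/-!
Expanding the square gives `ρ₀³ (w'')² + 4 ρ₀² ρ₀' w' w'' + 4 ρ₀ (ρ₀')² (w')²`. The last two terms
together with `2 ρ₀'' ρ₀² (w')²` form the derivative of the flux `2 ρ₀² ρ₀' (w')²`, which vanishes
at both endpoints because `ρ₀` does, so they integrate to `-2 ∫ ρ₀'' ρ₀² (w')²`.
-/

open Set MeasureTheory intervalIntegral

theorem Real.sq_rpow_three_halves_mul_add {r : ℝ} (hr : 0 ≤ r) (p q : ℝ) :
    (r ^ ((3:ℝ)/2) * p + 2 * r ^ ((1:ℝ)/2) * q) ^ 2 =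
      r ^ 3 * p ^ 2 + (4 * r ^ 2 * p * q + 4 * r * q ^ 2) := by
  have h_half : (r ^ ((1:ℝ)/2)) ^ 2 = r := by
    rw [← Real.rpow_natCast, ← Real.rpow_mul hr]; norm_num
  have h_three_halves : r ^ ((3:ℝ)/2) = r * r ^ ((1:ℝ)/2) := by
    rw [← Real.rpow_one_add' hr (by norm_num)]; norm_num
  rw [h_three_halves]
  linear_combination (r * p + 2 * q) ^ 2 * h_half

theorem ContDiffOn.hasDerivWithinAt_derivWithin_iteratedDerivWithin_two
    {𝕜 F : Type*} [NontriviallyNormedField 𝕜] [NormedAddCommGroup F] [NormedSpace 𝕜 F]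
    {f : 𝕜 → F} {s : Set 𝕜} {x : 𝕜} (hf : ContDiffOn 𝕜 2 f s) (hs : UniqueDiffOn 𝕜 s)
    (hx : x ∈ s) : HasDerivWithinAt (derivWithin f s) (iteratedDerivWithin 2 f s x) s x := by
  rw [iteratedDerivWithin_succ', iteratedDerivWithin_one]
  exact ((hf.derivWithin hs (m := 1) (by norm_num)).differentiableOn one_ne_zero x hx)
    |>.hasDerivWithinAt

theorem integral_eq_sub_of_hasDerivWithinAt_Icc
    {E : Type*} [NormedAddCommGroup E] [NormedSpace ℝ E] [CompleteSpace E]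
    {f f' : ℝ → E} {a b : ℝ} (hab : a ≤ b)
    (hf : ∀ x ∈ Icc a b, HasDerivWithinAt f (f' x) (Icc a b) x)
    (hf' : IntervalIntegrable f' volume a b) :
    ∫ x in a..b, f' x = f b - f a :=
  integral_eq_sub_of_hasDeriv_right_of_le hab (fun x hx => (hf x hx).continuousWithinAt)
    (fun x hx => ((hf x (Ioo_subset_Icc_self hx)).hasDerivAt
      (Icc_mem_nhds hx.1 hx.2)).hasDerivWithinAt) hf'

theorem integral_cross_terms_eq_of_eq_zero {ρ ρ' ρ'' v v' : ℝ → ℝ} {a b : ℝ} (hab : a ≤ b)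
    (hρ : ∀ x ∈ Icc a b, HasDerivWithinAt ρ (ρ' x) (Icc a b) x)
    (hρ' : ∀ x ∈ Icc a b, HasDerivWithinAt ρ' (ρ'' x) (Icc a b) x)
    (hv : ∀ x ∈ Icc a b, HasDerivWithinAt v (v' x) (Icc a b) x)
    (hρ''c : ContinuousOn ρ'' (Icc a b)) (hv'c : ContinuousOn v' (Icc a b))
    (ha : ρ a = 0) (hb : ρ b = 0) :
    ∫ x in a..b, (4 * ρ x ^ 2 * v' x * (ρ' x * v x) + 4 * ρ x * (ρ' x * v x) ^ 2) =
      -2 * ∫ x in a..b, ρ'' x * ρ x ^ 2 * v x ^ 2 := by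
  have hρc : ContinuousOn ρ (Icc a b) := fun x hx => (hρ x hx).continuousWithinAt
  have hρ'c : ContinuousOn ρ' (Icc a b) := fun x hx => (hρ' x hx).continuousWithinAt
  have hvc : ContinuousOn v (Icc a b) := fun x hx => (hv x hx).continuousWithinAt
  have h_flux : ∀ x ∈ Icc a b, HasDerivWithinAt (fun y => 2 * ρ y ^ 2 * ρ' y * v y ^ 2)
      ((4 * ρ x ^ 2 * v' x * (ρ' x * v x) + 4 * ρ x * (ρ' x * v x) ^ 2) +
        2 * (ρ'' x * ρ x ^ 2 * v x ^ 2)) (Icc a b) x := fun x hx => by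
    refine ((((hρ x hx).fun_pow 2).const_mul 2).fun_mul (hρ' x hx)).fun_mul
      ((hv x hx).fun_pow 2) |>.congr_deriv ?_
    push_cast; ring
  have h_cross : IntervalIntegrable
      (fun x => 4 * ρ x ^ 2 * v' x * (ρ' x * v x) + 4 * ρ x * (ρ' x * v x) ^ 2) volume a b :=
    ContinuousOn.intervalIntegrable_of_Icc hab (by fun_prop)
  have h_weight : IntervalIntegrable (fun x => ρ'' x * ρ x ^ 2 * v x ^ 2) volume a b :=
    ContinuousOn.intervalIntegrable_of_Icc hab (by fun_prop)
  have h_ftc :=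
    integral_eq_sub_of_hasDerivWithinAt_Icc hab h_flux (h_cross.add (h_weight.const_mul 2))
  rw [integral_add h_cross (h_weight.const_mul 2), intervalIntegral.integral_const_mul] at h_ftc
  simp only [ha, hb] at h_ftc
  linarith

/-- Weighted degenerate norm identity ((6.38)). -/
theorem weighted_degenerate_identity (ρ₀ w : ℝ → ℝ)
    (hρ : ContDiffOn ℝ 2 ρ₀ (Set.Icc 0 1))
    (hρnn : ∀ x ∈ Set.Icc (0:ℝ) 1, 0 ≤ ρ₀ x)
    (h0 : ρ₀ 0 = 0) (h1 : ρ₀ 1 = 0)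
    (hw : ContDiffOn ℝ 2 w (Set.Icc 0 1)) :
    ∫ x in (0:ℝ)..1,
        ((ρ₀ x) ^ ((3:ℝ)/2) * iteratedDerivWithin 2 w (Set.Icc 0 1) x +
          2 * (ρ₀ x) ^ ((1:ℝ)/2) * derivWithin ρ₀ (Set.Icc 0 1) x *
            derivWithin w (Set.Icc 0 1) x) ^ 2 =
      (∫ x in (0:ℝ)..1, (ρ₀ x) ^ 3 * (iteratedDerivWithin 2 w (Set.Icc 0 1) x) ^ 2) -
      2 * ∫ x in (0:ℝ)..1,
        iteratedDerivWithin 2 ρ₀ (Set.Icc 0 1) x * (ρ₀ x) ^ 2 *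
          (derivWithin w (Set.Icc 0 1) x) ^ 2 := by
  have hs : UniqueDiffOn ℝ (Icc (0:ℝ) 1) := uniqueDiffOn_Icc zero_lt_one
  have hρ₀c := hρ.continuousOn
  have hρ'c := hρ.continuousOn_derivWithin hs one_le_two
  have hw'c := hw.continuousOn_derivWithin hs one_le_two
  have hw''c := hw.continuousOn_iteratedDerivWithin le_rfl hs
  have h_cross := integral_cross_terms_eq_of_eq_zero zero_le_one
    (fun x hx => ((hρ.differentiableOn (by norm_num)) x hx).hasDerivWithinAt)
    (fun x hx => hρ.hasDerivWithinAt_derivWithin_iteratedDerivWithin_two hs hx)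
    (fun x hx => hw.hasDerivWithinAt_derivWithin_iteratedDerivWithin_two hs hx)
    (hρ.continuousOn_iteratedDerivWithin le_rfl hs) hw''c h0 h1
  calc _ = ∫ x in (0:ℝ)..1, (ρ₀ x ^ 3 * iteratedDerivWithin 2 w (Icc 0 1) x ^ 2 +
          (4 * ρ₀ x ^ 2 * iteratedDerivWithin 2 w (Icc 0 1) x *
              (derivWithin ρ₀ (Icc 0 1) x * derivWithin w (Icc 0 1) x) +
            4 * ρ₀ x * (derivWithin ρ₀ (Icc 0 1) x * derivWithin w (Icc 0 1) x) ^ 2)) :=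
        integral_congr fun x hx => by
          rw [uIcc_of_le zero_le_one] at hx
          rw [mul_assoc _ (derivWithin ρ₀ _ x), Real.sq_rpow_three_halves_mul_add (hρnn x hx)]
    _ = _ := by
      rw [intervalIntegral.integral_add, h_cross, sub_eq_add_neg, neg_mul]
      all_goals exact ContinuousOn.intervalIntegrable_of_Icc zero_le_one (by fun_prop)
end

section
/- Uniqueness for the degenerate parabolic problem (Section 5.7): Let κ > 0, T > 0, let ρ₀ : [0,1] → ℝ be continuously differentiable with ρ₀ > 0 on (0,1) and ρ₀(0) = ρ₀(1) = 0, and let δv : [0,T] × [0,1] → ℝ be twice continuously differentiable with δv(0,x) = 0 for all x ∈ [0,1] and ρ₀(x) ∂ₜδv(t,x) = κ ∂ₓ( ρ₀(x)² ∂ₓδv(t,x) ) for all (t,x) ∈ [0,T] × [0,1]. Then δv(t,x) = 0 for all t ∈ [0,T] and all x ∈ (0,1). -/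
open Set Function MeasureTheory intervalIntegral

/-! The weighted energy `E(t) = ∫₀¹ ρ₀ δv(t)²` vanishes at `t = 0`, is nonnegative, and is
nonincreasing: differentiating under the integral, substituting the equation and integrating by
parts (the boundary terms vanish because `ρ₀` vanishes at `0` and `1`) gives
`E' = -2κ ∫₀¹ ρ₀² (∂ₓδv)² ≤ 0`. Hence `E ≡ 0`, so the continuous nonnegative density `ρ₀ δv²`
vanishes identically, and `δv = 0` wherever `ρ₀ > 0`. -/

section PartialDerivative

variable {E G : Type*} [NormedAddCommGroup E] [NormedSpace ℝ E] [NormedAddCommGroup G]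
  [NormedSpace ℝ G] {F : ℝ → E → G} {s : Set ℝ} {t : Set E}

theorem derivWithin_left_eq_fderivWithin (hF : DifferentiableOn ℝ (uncurry F) (s ×ˢ t))
    (hs : UniqueDiffOn ℝ s) {p : ℝ × E} (hp : p ∈ s ×ˢ t) :
    derivWithin (fun r => F r p.2) s p.1 = fderivWithin ℝ (uncurry F) (s ×ˢ t) p (1, 0) := by
  have hcurve : HasDerivWithinAt (fun r : ℝ => (r, p.2)) ((1 : ℝ), (0 : E)) s p.1 :=
    ((hasDerivAt_id p.1).prodMk (hasDerivAt_const p.1 p.2)).hasDerivWithinAt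
  exact ((hF p hp).hasFDerivWithinAt.comp_hasDerivWithinAt p.1 hcurve
    fun r hr => mk_mem_prod hr hp.2).derivWithin (hs p.1 hp.1)

theorem ContDiffOn.continuousOn_derivWithin_left (hF : ContDiffOn ℝ 1 (uncurry F) (s ×ˢ t))
    (hs : UniqueDiffOn ℝ s) (ht : UniqueDiffOn ℝ t) :
    ContinuousOn (fun p : ℝ × E => derivWithin (fun r => F r p.2) s p.1) (s ×ˢ t) :=
  ((hF.continuousOn_fderivWithin (hs.prod ht) le_rfl).clm_apply continuousOn_const).congr
    fun _ hp => derivWithin_left_eq_fderivWithin (hF.differentiableOn one_ne_zero) hs hp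

end PartialDerivative

section ParametricIntegral

variable {a b c d : ℝ} {f f' : ℝ → ℝ → ℝ}

theorem continuousOn_intervalIntegral_of_continuousOn_prod (hab : a ≤ b) (hcd : c ≤ d)
    (hf : ContinuousOn (uncurry f) (Icc a b ×ˢ Icc c d)) :
    ContinuousOn (fun t => ∫ x in c..d, f t x) (Icc a b) := by
  let π : ℝ × ℝ → ℝ × ℝ := fun p => (projIcc a b hab p.1, projIcc c d hcd p.2)
  have hπ : Continuous π := by fun_prop
  have hg : Continuous (uncurry fun t x => f (projIcc a b hab t) (projIcc c d hcd x)) :=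
    hf.comp_continuous hπ fun p => mk_mem_prod (projIcc a b hab p.1).2 (projIcc c d hcd p.2).2
  refine (continuous_parametric_intervalIntegral_of_continuous' hg c d).continuousOn.congr
    fun t ht => integral_congr fun x hx => ?_
  rw [uIcc_of_le hcd] at hx
  simp [projIcc_of_mem hab ht, projIcc_of_mem hcd hx]

theorem hasDerivAt_intervalIntegral_of_continuousOn_prod (hcd : c ≤ d)
    (hf : ContinuousOn (uncurry f) (Icc a b ×ˢ Icc c d))
    (hf' : ContinuousOn (uncurry f') (Icc a b ×ˢ Icc c d))
    (hderiv : ∀ t ∈ Ioo a b, ∀ x ∈ Icc c d, HasDerivAt (f · x) (f' t x) t)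
    {t₀ : ℝ} (ht₀ : t₀ ∈ Ioo a b) :
    HasDerivAt (fun t => ∫ x in c..d, f t x) (∫ x in c..d, f' t₀ x) t₀ := by
  obtain ⟨M, hM⟩ := (isCompact_Icc.prod isCompact_Icc).exists_bound_of_continuousOn hf'
  have hIoc : uIoc c d ⊆ Icc c d := by rw [uIoc_of_le hcd]; exact Ioc_subset_Icc_self
  have hslice : ∀ {g : ℝ → ℝ → ℝ}, ContinuousOn (uncurry g) (Icc a b ×ˢ Icc c d) →
      ∀ t ∈ Ioo a b, AEStronglyMeasurable (g t) (volume.restrict (uIoc c d)) := fun hg t ht =>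
    ((hg.uncurry_left t (Ioo_subset_Icc_self ht)).mono hIoc).aestronglyMeasurable measurableSet_uIoc
  refine (hasDerivAt_integral_of_dominated_loc_of_deriv_le (bound := fun _ => M)
    (isOpen_Ioo.mem_nhds ht₀) ?_ ?_ (hslice hf' t₀ ht₀) ?_ intervalIntegrable_const ?_).2
  · filter_upwards [isOpen_Ioo.mem_nhds ht₀] with t ht using hslice hf t ht
  · exact (hf.uncurry_left t₀ (Ioo_subset_Icc_self ht₀)).intervalIntegrable_of_Icc hcd
  · exact ae_of_all _ fun x hx t ht => hM (t, x) ⟨Ioo_subset_Icc_self ht, hIoc hx⟩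
  · exact ae_of_all _ fun x hx t ht => hderiv t ht x (hIoc hx)

end ParametricIntegral

section WeightedLaplacian

variable {a b : ℝ} {u w : ℝ → ℝ}

theorem integral_mul_derivWithin_weight_mul_derivWithin (hab : a < b)
    (hu : ContDiffOn ℝ 2 u (Icc a b)) (hw : ContDiffOn ℝ 1 w (Icc a b)) (ha : w a = 0)
    (hb : w b = 0) :
    ∫ x in a..b, u x * derivWithin (fun y => w y * derivWithin u (Icc a b) y) (Icc a b) x =
      -∫ x in a..b, w x * derivWithin u (Icc a b) x ^ 2 := by
  have hI : uIcc a b = Icc a b := uIcc_of_le hab.le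
  have hu' : ContDiffOn ℝ 1 (derivWithin u (Icc a b)) (Icc a b) :=
    hu.derivWithin (uniqueDiffOn_Icc hab) (by norm_num)
  have hv : ContDiffOn ℝ 1 (fun y => w y * derivWithin u (Icc a b) y) (Icc a b) := hw.mul hu'
  have hasDeriv : ∀ {g : ℝ → ℝ}, ContDiffOn ℝ 1 g (Icc a b) →
      ∀ x ∈ uIcc a b, HasDerivWithinAt g (derivWithin g (Icc a b) x) (uIcc a b) x :=
    fun hg x hx => by rw [hI] at hx ⊢; exact (hg.differentiableOn one_ne_zero x hx).hasDerivWithinAt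
  rw [integral_mul_deriv_eq_deriv_mul_of_hasDerivWithinAt (hasDeriv (hu.of_le one_le_two))
    (hasDeriv hv) (hu'.continuousOn.mono hI.subset).intervalIntegrable
    ((hv.continuousOn_derivWithin (uniqueDiffOn_Icc hab) le_rfl).mono hI.subset).intervalIntegrable,
    ha, hb]
  simp only [zero_mul, mul_zero, sub_zero, zero_sub]
  congr 1
  exact integral_congr fun x _ => by ring

theorem integral_mul_derivWithin_weight_mul_derivWithin_nonpos (hab : a < b)
    (hu : ContDiffOn ℝ 2 u (Icc a b)) (hw : ContDiffOn ℝ 1 w (Icc a b)) (ha : w a = 0)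
    (hb : w b = 0) (hw_nonneg : ∀ x ∈ Icc a b, 0 ≤ w x) :
    ∫ x in a..b, u x * derivWithin (fun y => w y * derivWithin u (Icc a b) y) (Icc a b) x ≤ 0 := by
  rw [integral_mul_derivWithin_weight_mul_derivWithin hab hu hw ha hb, neg_nonpos]
  exact integral_nonneg hab.le fun x hx => mul_nonneg (hw_nonneg x hx) (sq_nonneg _)

end WeightedLaplacian

theorem eqOn_zero_of_intervalIntegral_eq_zero_of_nonneg {f : ℝ → ℝ} {a b : ℝ} (hab : a ≤ b)
    (hf : ContinuousOn f (Icc a b)) (hf_nonneg : ∀ x ∈ Icc a b, 0 ≤ f x)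
    (h : ∫ x in a..b, f x = 0) : EqOn f 0 (Ioc a b) := by
  have hf_nonneg_ae : 0 ≤ᵐ[volume.restrict (Ioc a b)] f :=
    (ae_restrict_iff' measurableSet_Ioc).2 <| ae_of_all _ fun x hx =>
      hf_nonneg x (Ioc_subset_Icc_self hx)
  exact Measure.eqOn_Ioc_of_ae_eq volume
    ((integral_eq_zero_iff_of_le_of_nonneg_ae hab hf_nonneg_ae
      (hf.intervalIntegrable_of_Icc hab)).1 h)
    (hf.mono Ioc_subset_Icc_self) continuousOn_const

theorem nonneg_on_Icc_of_pos_on_Ioo {α β : Type*} [PartialOrder α] [Zero β] [Preorder β]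
    {f : α → β} {a b : α} (ha : f a = 0) (hb : f b = 0) (hpos : ∀ x ∈ Ioo a b, 0 < f x) :
    ∀ x ∈ Icc a b, 0 ≤ f x := by
  rintro x ⟨hax, hxb⟩
  rcases hax.eq_or_lt with rfl | hax
  · exact ha.ge
  rcases hxb.eq_or_lt with rfl | hxb
  · exact hb.ge
  exact (hpos x ⟨hax, hxb⟩).le

noncomputable def weightedEnergy (ρ : ℝ → ℝ) (a b : ℝ) (u : ℝ → ℝ) : ℝ :=
  ∫ x in a..b, ρ x * u x ^ 2

section WeightedEnergy

variable {ρ : ℝ → ℝ} {a b : ℝ}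

theorem weightedEnergy_nonneg (hab : a ≤ b) (hρ : ∀ x ∈ Icc a b, 0 ≤ ρ x) (u : ℝ → ℝ) :
    0 ≤ weightedEnergy ρ a b u :=
  integral_nonneg hab fun x hx => mul_nonneg (hρ x hx) (sq_nonneg _)

theorem weightedEnergy_eq_zero_of_eq_zero (hab : a ≤ b) {u : ℝ → ℝ}
    (hu : ∀ x ∈ Icc a b, u x = 0) : weightedEnergy ρ a b u = 0 := by
  refine (integral_congr fun x hx => ?_).trans integral_zero
  rw [uIcc_of_le hab] at hx
  simp [hu x hx]

theorem eq_zero_of_weightedEnergy_eq_zero (hab : a ≤ b) (hρ : ContinuousOn ρ (Icc a b))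
    (hρ_nonneg : ∀ x ∈ Icc a b, 0 ≤ ρ x) {u : ℝ → ℝ} (hu : ContinuousOn u (Icc a b))
    (h : weightedEnergy ρ a b u = 0) {x : ℝ} (hx : x ∈ Ioc a b) (hρx : 0 < ρ x) : u x = 0 := by
  have hdensity : ρ x * u x ^ 2 = 0 :=
    eqOn_zero_of_intervalIntegral_eq_zero_of_nonneg hab (hρ.mul (hu.pow 2))
      (fun y hy => mul_nonneg (hρ_nonneg y hy) (sq_nonneg _)) h hx
  exact pow_eq_zero_iff two_ne_zero |>.1 <| (mul_eq_zero.1 hdensity).resolve_left hρx.ne'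

variable {T : ℝ} {v : ℝ → ℝ → ℝ}

theorem continuousOn_weightedEnergy (hab : a ≤ b) (hT : 0 ≤ T) (hρ : ContinuousOn ρ (Icc a b))
    (hv : ContinuousOn (uncurry v) (Icc 0 T ×ˢ Icc a b)) :
    ContinuousOn (fun t => weightedEnergy ρ a b (v t)) (Icc 0 T) :=
  continuousOn_intervalIntegral_of_continuousOn_prod hT hab
    ((hρ.comp continuousOn_snd fun _ hp => hp.2).mul (hv.pow 2))

theorem hasDerivAt_weightedEnergy (hab : a < b) (hT : 0 < T) (hρ : ContinuousOn ρ (Icc a b))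
    (hv : ContDiffOn ℝ 1 (uncurry v) (Icc 0 T ×ˢ Icc a b)) {t : ℝ} (ht : t ∈ Ioo 0 T) :
    HasDerivAt (fun t => weightedEnergy ρ a b (v t))
      (∫ x in a..b, 2 * ρ x * v t x * derivWithin (fun s => v s x) (Icc 0 T) t) t := by
  have hρ' : ContinuousOn (fun p : ℝ × ℝ => ρ p.2) (Icc 0 T ×ˢ Icc a b) :=
    hρ.comp continuousOn_snd fun _ hp => hp.2
  have hvₜ := hv.continuousOn_derivWithin_left (uniqueDiffOn_Icc hT) (uniqueDiffOn_Icc hab)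
  refine hasDerivAt_intervalIntegral_of_continuousOn_prod (f := fun t x => ρ x * v t x ^ 2)
    (f' := fun t x => 2 * ρ x * v t x * derivWithin (fun s => v s x) (Icc 0 T) t) hab.le
    (by exact hρ'.mul (hv.continuousOn.pow 2))
    (by exact ((continuousOn_const.mul hρ').mul hv.continuousOn).mul hvₜ) (fun s hs x hx => ?_) ht
  have hvx : DifferentiableWithinAt ℝ (fun s => v s x) (Icc 0 T) s :=
    (hv.comp (contDiff_id.prodMk contDiff_const).contDiffOn fun r hr => mk_mem_prod hr hx
      ).differentiableOn one_ne_zero s (Ioo_subset_Icc_self hs)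
  exact ((hvx.hasDerivWithinAt.hasDerivAt (Icc_mem_nhds hs.1 hs.2)).pow 2 |>.const_mul (ρ x)
    ).congr_deriv (by ring)

theorem antitoneOn_weightedEnergy_of_pde {κ : ℝ} (hκ : 0 ≤ κ) (hab : a < b) (hT : 0 < T)
    (hρ : ContDiffOn ℝ 1 ρ (Icc a b)) (ha : ρ a = 0) (hb : ρ b = 0)
    (hv : ContDiffOn ℝ 2 (uncurry v) (Icc 0 T ×ˢ Icc a b))
    (hpde : ∀ t ∈ Ioo 0 T, ∀ x ∈ Icc a b,
      ρ x * derivWithin (fun s => v s x) (Icc 0 T) t =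
        κ * derivWithin (fun y => ρ y ^ 2 * derivWithin (v t) (Icc a b) y) (Icc a b) x) :
    AntitoneOn (fun t => weightedEnergy ρ a b (v t)) (Icc 0 T) := by
  refine antitoneOn_of_hasDerivWithinAt_nonpos (convex_Icc 0 T)
    (f' := fun t => ∫ x in a..b, 2 * ρ x * v t x * derivWithin (fun s => v s x) (Icc 0 T) t)
    (continuousOn_weightedEnergy hab.le hT.le hρ.continuousOn hv.continuousOn)
    (fun t ht => ?_) fun t ht => ?_ <;> rw [interior_Icc] at ht
  · exact (hasDerivAt_weightedEnergy hab hT hρ.continuousOn (hv.of_le one_le_two) ht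
      ).hasDerivWithinAt
  have hslice : ContDiffOn ℝ 2 (v t) (Icc a b) :=
    hv.comp (contDiff_const.prodMk contDiff_id).contDiffOn fun x hx =>
      mk_mem_prod (Ioo_subset_Icc_self ht) hx
  calc ∫ x in a..b, 2 * ρ x * v t x * derivWithin (fun s => v s x) (Icc 0 T) t
      = 2 * κ * ∫ x in a..b, v t x *
          derivWithin (fun y => ρ y ^ 2 * derivWithin (v t) (Icc a b) y) (Icc a b) x := by
        rw [← intervalIntegral.integral_const_mul]
        refine integral_congr fun x hx => ?_
        rw [uIcc_of_le hab.le] at hx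
        linear_combination 2 * v t x * hpde t ht x hx
    _ ≤ 0 := mul_nonpos_of_nonneg_of_nonpos (by positivity)
        (integral_mul_derivWithin_weight_mul_derivWithin_nonpos hab hslice (hρ.pow 2)
          (by simp [ha]) (by simp [hb]) fun x _ => sq_nonneg _)

end WeightedEnergy

/-- Uniqueness for the degenerate parabolic problem (Section 5.7). -/
theorem parabolic_uniqueness (κ T : ℝ) (hκ : 0 < κ) (hT : 0 < T)
    (ρ₀ : ℝ → ℝ) (hρ : ContDiffOn ℝ 1 ρ₀ (Set.Icc 0 1))
    (hpos : ∀ x ∈ Set.Ioo (0:ℝ) 1, 0 < ρ₀ x)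
    (h0 : ρ₀ 0 = 0) (h1 : ρ₀ 1 = 0)
    (δv : ℝ → ℝ → ℝ)
    (hδv : ContDiffOn ℝ 2 (fun p : ℝ × ℝ => δv p.1 p.2) (Set.Icc 0 T ×ˢ Set.Icc 0 1))
    (hinit : ∀ x ∈ Set.Icc (0:ℝ) 1, δv 0 x = 0)
    (hpde : ∀ t ∈ Set.Icc 0 T, ∀ x ∈ Set.Icc (0:ℝ) 1,
      ρ₀ x * derivWithin (fun s => δv s x) (Set.Icc 0 T) t =
        κ * derivWithin
          (fun y => ρ₀ y ^ 2 * derivWithin (fun z => δv t z) (Set.Icc 0 1) y)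
          (Set.Icc 0 1) x) :
    ∀ t ∈ Set.Icc 0 T, ∀ x ∈ Set.Ioo (0:ℝ) 1, δv t x = 0 := by
  intro t ht x hx
  have hρ_nonneg : ∀ y ∈ Icc (0 : ℝ) 1, 0 ≤ ρ₀ y := nonneg_on_Icc_of_pos_on_Ioo h0 h1 hpos
  have henergy_anti := antitoneOn_weightedEnergy_of_pde hκ.le one_pos hT hρ h0 h1 hδv
    fun s hs => hpde s (Ioo_subset_Icc_self hs)
  have henergy_init : weightedEnergy ρ₀ 0 1 (δv 0) = 0 :=
    weightedEnergy_eq_zero_of_eq_zero zero_le_one hinit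
  have henergy : weightedEnergy ρ₀ 0 1 (δv t) = 0 :=
    le_antisymm ((henergy_anti ⟨le_rfl, hT.le⟩ ht ht.1).trans_eq henergy_init)
      (weightedEnergy_nonneg zero_le_one hρ_nonneg _)
  exact eq_zero_of_weightedEnergy_eq_zero zero_le_one hρ.continuousOn hρ_nonneg
    (hδv.continuousOn.uncurry_left t ht) henergy (Ioo_subset_Ioc_self hx) (hpos x hx)
end
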